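/- Let B > 0, let 0 < γ₂ < π/2 and set ψ₂ = π/2 − γ₂. Let (U, ψ) be a solution of the capillary ODE system with parameter B on [−1, 1] such that ψ(ξ) ∈ [−ψ₂, ψ₂] for every ξ ∈ [−1, 1], and put λ = sin ψ(1) − sin ψ(−1), assumed positive. Then for every ξ ∈ [−1, 1], U(ξ)² ≥ λ²/(4B²) − (2/B)(1 − sin γ₂). In particular this lower bound tends to +∞ as B → 0 with λ, γ₂ fixed. (Estimates (15)–(18) of the paper, Case γ₁ + γ₂ < π.) -/

import Mathlib

/-
The energy `E = (B/2) U² + cos ψ` is conserved along a solution, since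
`E' = B U tan ψ − tan ψ · (sin ψ)' = 0`. By the mean value theorem for `sin ψ` there is a point `c`
where `B U(c) = λ/2`, so `E = λ²/(8B) + cos ψ(c) ≥ λ²/(8B) + sin γ₂` because `|ψ| ≤ π/2 − γ₂`.
At any other point `cos ψ ≤ 1`, hence `(B/2) U² ≥ λ²/(8B) − (1 − sin γ₂)`.
-/

open Real Set

/-- A solution of the (normalized) capillary ODE system with parameter `B` on a set `I ⊆ ℝ`. -/
def IsCapillarySol (B : ℝ) (I : Set ℝ) (U ψ : ℝ → ℝ) : Prop :=
  ∀ ξ ∈ I, ψ ξ ∈ Set.Ioo (-(π / 2)) (π / 2) ∧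
    HasDerivAt (fun t => Real.sin (ψ t)) (B * U ξ) ξ ∧
    HasDerivAt U (Real.tan (ψ ξ)) ξ

theorem Real.sin_le_cos_of_abs_le {γ x : ℝ} (hγ : -(π / 2) ≤ γ) (hx : |x| ≤ π / 2 - γ) :
    sin γ ≤ cos x := by
  rw [← cos_abs x, ← cos_pi_div_two_sub]
  exact cos_le_cos_of_nonneg_of_le_pi (abs_nonneg x) (by linarith [pi_pos]) hx

/-- The energy `(B/2) U² + cos ψ`, with `cos ψ` written through `sin ψ`, the only function of `ψ`
that the system differentiates. -/
noncomputable def capillaryEnergy (B : ℝ) (U ψ : ℝ → ℝ) (t : ℝ) : ℝ :=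
  B / 2 * U t ^ 2 + √(1 - sin (ψ t) ^ 2)

namespace IsCapillarySol

variable {B : ℝ} {I : Set ℝ} {U ψ : ℝ → ℝ}

theorem cos_eq_sqrt (h : IsCapillarySol B I U ψ) {ξ : ℝ} (hξ : ξ ∈ I) :
    cos (ψ ξ) = √(1 - sin (ψ ξ) ^ 2) :=
  cos_eq_sqrt_one_sub_sin_sq (h ξ hξ).1.1.le (h ξ hξ).1.2.le

theorem capillaryEnergy_eq (h : IsCapillarySol B I U ψ) {ξ : ℝ} (hξ : ξ ∈ I) :
    capillaryEnergy B U ψ ξ = B / 2 * U ξ ^ 2 + cos (ψ ξ) := by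
  rw [capillaryEnergy, h.cos_eq_sqrt hξ]

theorem hasDerivAt_capillaryEnergy (h : IsCapillarySol B I U ψ) {ξ : ℝ} (hξ : ξ ∈ I) :
    HasDerivAt (capillaryEnergy B U ψ) 0 ξ := by
  obtain ⟨hψ, hsin, hU⟩ := h ξ hξ
  have hcos : 0 < cos (ψ ξ) := cos_pos_of_mem_Ioo hψ
  have hcos_sq : 1 - sin (ψ ξ) ^ 2 = cos (ψ ξ) ^ 2 := by rw [← cos_sq']
  have hsin_sq : HasDerivAt (fun t => 1 - sin (ψ t) ^ 2) (-(2 * sin (ψ ξ) * (B * U ξ))) ξ := by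
    simpa using (hsin.pow 2).const_sub 1
  have hsqrt := (hasDerivAt_sqrt (by rw [hcos_sq]; positivity)).comp ξ hsin_sq
  have hU_sq : HasDerivAt (fun t => B / 2 * U t ^ 2) (B / 2 * (2 * U ξ * tan (ψ ξ))) ξ := by
    simpa using (hU.pow 2).const_mul (B / 2)
  refine (hU_sq.add hsqrt).congr_deriv ?_
  rw [← h.cos_eq_sqrt hξ, tan_eq_sin_div_cos]
  field_simp
  ring

theorem capillaryEnergy_eq_of_mem_Icc {a b : ℝ} (h : IsCapillarySol B (Icc a b) U ψ) {x y : ℝ}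
    (hx : x ∈ Icc a b) (hy : y ∈ Icc a b) :
    capillaryEnergy B U ψ x = capillaryEnergy B U ψ y := by
  have hconst := constant_of_has_deriv_right_zero
    (fun t ht => (h.hasDerivAt_capillaryEnergy ht).continuousAt.continuousWithinAt)
    fun t ht => (h.hasDerivAt_capillaryEnergy (Ico_subset_Icc_self ht)).hasDerivWithinAt
  rw [hconst x hx, hconst y hy]

theorem exists_mul_eq_slope {a b : ℝ} (hab : a < b) (h : IsCapillarySol B (Icc a b) U ψ) :
    ∃ c ∈ Ioo a b, B * U c = (sin (ψ b) - sin (ψ a)) / (b - a) :=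
  exists_hasDerivAt_eq_slope (fun t => sin (ψ t)) (fun t => B * U t) hab
    (fun t ht => (h t ht).2.1.continuousAt.continuousWithinAt)
    fun t ht => (h t (Ioo_subset_Icc_self ht)).2.1

end IsCapillarySol

theorem capillary_height_lower_bound_general
    (B : ℝ) (hB : 0 < B) (γ₂ : ℝ) (hγ₂ : 0 < γ₂)
    (U ψ : ℝ → ℝ) (h : IsCapillarySol B (Set.Icc (-1) 1) U ψ)
    (hψrange : ∀ ξ ∈ Set.Icc (-1 : ℝ) 1, ψ ξ ∈ Set.Icc (-(π / 2 - γ₂)) (π / 2 - γ₂))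
    (lam : ℝ) (hlam : lam = Real.sin (ψ 1) - Real.sin (ψ (-1))) :
    ∀ ξ ∈ Set.Icc (-1 : ℝ) 1,
      U ξ ^ 2 ≥ lam ^ 2 / (4 * B ^ 2) - 2 / B * (1 - Real.sin γ₂) := by
  intro ξ hξ
  obtain ⟨c, hc_mem, hBUc⟩ := h.exists_mul_eq_slope (by norm_num)
  have hc : c ∈ Icc (-1 : ℝ) 1 := Ioo_subset_Icc_self hc_mem
  have hUc : U c = lam / (2 * B) := by
    rw [hlam, eq_div_iff (by positivity)]
    norm_num at hBUc
    linarith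
  have henergy := h.capillaryEnergy_eq_of_mem_Icc hξ hc
  rw [h.capillaryEnergy_eq hξ, h.capillaryEnergy_eq hc, hUc] at henergy
  have hcos_c : sin γ₂ ≤ cos (ψ c) :=
    sin_le_cos_of_abs_le (by linarith [pi_pos]) (abs_le.2 (hψrange c hc))
  have hcos_ξ : cos (ψ ξ) ≤ 1 := cos_le_one _
  have hscaled : B / 2 * (lam ^ 2 / (4 * B ^ 2) - 2 / B * (1 - sin γ₂)) ≤ B / 2 * U ξ ^ 2 :=
    calc B / 2 * (lam ^ 2 / (4 * B ^ 2) - 2 / B * (1 - sin γ₂))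
        _ = B / 2 * (lam / (2 * B)) ^ 2 + sin γ₂ - 1 := by field_simp; ring
        _ ≤ B / 2 * U ξ ^ 2 := by linarith
  exact le_of_mul_le_mul_left hscaled (by positivity)

/-- Estimates (15)–(18), case γ₁ + γ₂ < π: with λ = sin ψ(1) − sin ψ(−1) > 0, every height
satisfies `U ξ ^ 2 ≥ λ²/(4B²) − (2/B)(1 − sin γ₂)`, a bound tending to +∞ as B → 0. -/
theorem capillary_height_lower_bound
    (B : ℝ) (hB : 0 < B) (γ₂ : ℝ) (hγ₂ : 0 < γ₂) (hγ₂' : γ₂ < π / 2)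
    (U ψ : ℝ → ℝ) (h : IsCapillarySol B (Set.Icc (-1) 1) U ψ)
    (hψrange : ∀ ξ ∈ Set.Icc (-1 : ℝ) 1, ψ ξ ∈ Set.Icc (-(π / 2 - γ₂)) (π / 2 - γ₂))
    (lam : ℝ) (hlam : lam = Real.sin (ψ 1) - Real.sin (ψ (-1))) (hlampos : 0 < lam) :
    ∀ ξ ∈ Set.Icc (-1 : ℝ) 1,
      U ξ ^ 2 ≥ lam ^ 2 / (4 * B ^ 2) - 2 / B * (1 - Real.sin γ₂) :=
  capillary_height_lower_bound_general B hB γ₂ hγ₂ U ψ h hψrange lam hlam
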